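/- arXiv:1707.02522 — 5 statements merged into one kernel-verified Lean document; each statement's English description precedes it below -/
import Mathlib

section
/- C_max is quasiconvex: for any finite family of states ρ_i and probability weights p_i (p_i ≥ 0, Σ_i p_i = 1), one has C_max(Σ_i p_i ρ_i) ≤ max_i C_max(ρ_i). -/
open scoped Matrix ComplexOrder

namespace OneShot

variable {ι κ : Type*} [Fintype ι] [DecidableEq ι] [Fintype κ] [DecidableEq κ]

/-- A quantum state: a positive semidefinite matrix with unit trace. -/
def IsState (ρ : Matrix ι ι ℂ) : Prop := ρ.PosSemidef ∧ ρ.trace = 1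

/-- An incoherent state: a state that is diagonal in the computational basis. -/
def IsIncoherent (ρ : Matrix ι ι ℂ) : Prop := IsState ρ ∧ ρ.IsDiag

/-- The completely dephasing channel `Δ`. -/
def dephase (ρ : Matrix ι ι ℂ) : Matrix ι ι ℂ := Matrix.diagonal fun i => ρ i i

/-- The max-relative entropy of coherence
`C_max(ρ) = min_{δ ∈ 𝓘} D_max(ρ‖δ) = log₂ min {λ ≥ 0 | ∃ δ ∈ 𝓘, ρ ≤ λ δ}`. -/
noncomputable def Cmax (ρ : Matrix ι ι ℂ) : ℝ :=
  Real.logb 2 (sInf {l : ℝ | 0 ≤ l ∧ ∃ δ, IsIncoherent δ ∧ (l • δ - ρ).PosSemidef})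

/-- `C_{Δ,max}(ρ) = log₂ min {λ ≥ 0 | ρ ≤ λ Δ(ρ)}`. -/
noncomputable def CDmax (ρ : Matrix ι ι ℂ) : ℝ :=
  Real.logb 2 (sInf {l : ℝ | 0 ≤ l ∧ (l • dephase ρ - ρ).PosSemidef})

/-- Complete positivity of a linear map on matrices. -/
def CompletelyPositive (Λ : Matrix ι ι ℂ →ₗ[ℂ] Matrix κ κ ℂ) : Prop :=
  ∀ (k : ℕ) (M : Matrix (Fin k × ι) (Fin k × ι) ℂ), M.PosSemidef →
    (Matrix.of fun p q : Fin k × κ =>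
      Λ (Matrix.of fun x y => M (p.1, x) (q.1, y)) p.2 q.2).PosSemidef

/-- Trace preservation. -/
def TracePreserving (Λ : Matrix ι ι ℂ →ₗ[ℂ] Matrix κ κ ℂ) : Prop :=
  ∀ A, (Λ A).trace = A.trace

/-- A maximally incoherent operation (MIO): a CPTP map sending every incoherent state
to an incoherent state. -/
def IsMIO (Λ : Matrix ι ι ℂ →ₗ[ℂ] Matrix κ κ ℂ) : Prop :=
  CompletelyPositive Λ ∧ TracePreserving Λ ∧ ∀ δ, IsIncoherent δ → IsIncoherent (Λ δ)

/-- A dephasing-covariant incoherent operation (DIO): a CPTP map commuting with `Δ`. -/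
def IsDIO (Λ : Matrix ι ι ℂ →ₗ[ℂ] Matrix ι ι ℂ) : Prop :=
  CompletelyPositive Λ ∧ TracePreserving Λ ∧ ∀ ρ, Λ (dephase ρ) = dephase (Λ ρ)

/-- An incoherent-preserving (Kraus) operator: `K δ Kᴴ` is a nonnegative multiple of an
incoherent state, for every incoherent state `δ`. -/
def IncoherentPreserving (K : Matrix κ ι ℂ) : Prop :=
  ∀ δ : Matrix ι ι ℂ, IsIncoherent δ →
    ∃ c : ℝ, 0 ≤ c ∧ ∃ δ' : Matrix κ κ ℂ, IsIncoherent δ' ∧ K * δ * Kᴴ = (c : ℂ) • δ'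

/-- An incoherent operation (IO). -/
def IsIO (Λ : Matrix ι ι ℂ →ₗ[ℂ] Matrix κ κ ℂ) : Prop :=
  ∃ (N : ℕ) (K : Fin N → Matrix κ ι ℂ),
    (∀ n, IncoherentPreserving (K n)) ∧ (∑ n, (K n)ᴴ * K n = 1) ∧
    ∀ ρ, Λ ρ = ∑ n, K n * ρ * (K n)ᴴ

/-- A strictly incoherent operation (SIO). -/
def IsSIO (Λ : Matrix ι ι ℂ →ₗ[ℂ] Matrix κ κ ℂ) : Prop :=
  ∃ (N : ℕ) (K : Fin N → Matrix κ ι ℂ),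
    (∀ n, IncoherentPreserving (K n)) ∧ (∀ n, IncoherentPreserving (K n)ᴴ) ∧
    (∑ n, (K n)ᴴ * K n = 1) ∧ ∀ ρ, Λ ρ = ∑ n, K n * ρ * (K n)ᴴ

/-- The outer product `|ψ⟩⟨ψ|`. -/
def outer (ψ : ι → ℂ) : Matrix ι ι ℂ := Matrix.of fun i j => ψ i * star (ψ j)

/-- `T ψ` is the number of nonzero computational-basis coefficients of `ψ`. -/
noncomputable def T (ψ : ι → ℂ) : ℕ := (Finset.univ.filter fun i => ψ i ≠ 0).card

/-- A finite pure-state decomposition `ρ = Σ_j p_j |ψ_j⟩⟨ψ_j|`. -/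
def IsDecomposition (ρ : Matrix ι ι ℂ) (n : ℕ) (p : Fin n → ℝ) (ψ : Fin n → ι → ℂ) : Prop :=
  (∀ j, 0 < p j) ∧ (∑ j, p j = 1) ∧ (∀ j, ∑ i, Complex.normSq (ψ j i) = 1) ∧
    ρ = ∑ j, p j • outer (ψ j)

/-- `C_0(ρ) = min over decompositions of max_j log₂ T(ψ_j)`. -/
noncomputable def C0 (ρ : Matrix ι ι ℂ) : ℝ :=
  sInf { r | ∃ n p ψ, IsDecomposition ρ n p ψ ∧
    r = Real.logb 2 (↑(Finset.univ.sup fun j => T (ψ j)) : ℝ) }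

/-- Matrix square root of a positive semidefinite matrix (junk value `0` elsewhere). -/
noncomputable def msqrt (A : Matrix ι ι ℂ) : Matrix ι ι ℂ :=
  letI := Classical.propDecidable A.PosSemidef
  if h : A.PosSemidef then
    (h.1.eigenvectorUnitary : Matrix ι ι ℂ) *
      Matrix.diagonal (fun i => ((Real.sqrt (h.1.eigenvalues i) : ℝ) : ℂ)) *
      (star h.1.eigenvectorUnitary : Matrix ι ι ℂ)
  else 0

/-- Uhlmann fidelity `F(ρ,σ) = (Tr √(√ρ σ √ρ))²`. -/
noncomputable def Fid (ρ σ : Matrix ι ι ℂ) : ℝ :=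
  ((msqrt (msqrt ρ * σ * msqrt ρ)).trace.re) ^ 2

/-- Smoothed `C_max`. -/
noncomputable def Cmaxeps (ρ : Matrix ι ι ℂ) (ε : ℝ) : ℝ :=
  sInf { r | ∃ ρ', IsState ρ' ∧ 1 - ε ≤ Fid ρ ρ' ∧ r = Cmax ρ' }

/-- Smoothed `C_{Δ,max}`. -/
noncomputable def CDmaxeps (ρ : Matrix ι ι ℂ) (ε : ℝ) : ℝ :=
  sInf { r | ∃ ρ', IsState ρ' ∧ 1 - ε ≤ Fid ρ ρ' ∧ r = CDmax ρ' }

/-- Smoothed `C_0`. -/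
noncomputable def C0eps (ρ : Matrix ι ι ℂ) (ε : ℝ) : ℝ :=
  sInf { r | ∃ ρ', IsState ρ' ∧ 1 - ε ≤ Fid ρ ρ' ∧ r = C0 ρ' }

/-- The maximally coherent state `Ψ_M = |Ψ_M⟩⟨Ψ_M|` of dimension `M`. -/
noncomputable def PsiM (M : ℕ) : Matrix (Fin M) (Fin M) ℂ := Matrix.of fun _ _ => (1 : ℂ) / M

/-- One-shot coherence cost under MIO. -/
noncomputable def CMIOeps (ρ : Matrix ι ι ℂ) (ε : ℝ) : ℝ :=
  sInf { r | ∃ M : ℕ, 1 ≤ M ∧ r = Real.logb 2 M ∧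
    ∃ Λ : Matrix (Fin M) (Fin M) ℂ →ₗ[ℂ] Matrix ι ι ℂ, IsMIO Λ ∧ 1 - ε ≤ Fid ρ (Λ (PsiM M)) }

/-- One-shot coherence cost under DIO. -/
noncomputable def CDIOeps (ρ : Matrix ι ι ℂ) (ε : ℝ) : ℝ :=
  sInf { r | ∃ M : ℕ, 1 ≤ M ∧ r = Real.logb 2 M ∧
    ∃ Λ : Matrix (Fin M) (Fin M) ℂ →ₗ[ℂ] Matrix ι ι ℂ,
      CompletelyPositive Λ ∧ TracePreserving Λ ∧ (∀ ω, Λ (dephase ω) = dephase (Λ ω)) ∧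
      1 - ε ≤ Fid ρ (Λ (PsiM M)) }

/-- One-shot coherence cost under IO. -/
noncomputable def CIOeps (ρ : Matrix ι ι ℂ) (ε : ℝ) : ℝ :=
  sInf { r | ∃ M : ℕ, 1 ≤ M ∧ r = Real.logb 2 M ∧
    ∃ Λ : Matrix (Fin M) (Fin M) ℂ →ₗ[ℂ] Matrix ι ι ℂ, IsIO Λ ∧ 1 - ε ≤ Fid ρ (Λ (PsiM M)) }

/-- One-shot coherence cost under SIO. -/
noncomputable def CSIOeps (ρ : Matrix ι ι ℂ) (ε : ℝ) : ℝ :=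
  sInf { r | ∃ M : ℕ, 1 ≤ M ∧ r = Real.logb 2 M ∧
    ∃ Λ : Matrix (Fin M) (Fin M) ℂ →ₗ[ℂ] Matrix ι ι ℂ, IsSIO Λ ∧ 1 - ε ≤ Fid ρ (Λ (PsiM M)) }

/-- Matrix logarithm (base 2) via the spectral decomposition, with `log₂ 0 = 0` junk
convention on the kernel, and junk value `0` on non-Hermitian matrices. -/
noncomputable def mlog2 (A : Matrix ι ι ℂ) : Matrix ι ι ℂ :=
  letI := Classical.propDecidable A.IsHermitian
  if h : A.IsHermitian then
    (h.eigenvectorUnitary : Matrix ι ι ℂ) *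
      Matrix.diagonal (fun i => (Real.logb 2 (h.eigenvalues i) : ℂ)) *
      (h.eigenvectorUnitary : Matrix ι ι ℂ)ᴴ
  else 0

/-- The relative entropy of coherence `C_r(ρ) = min_{δ ∈ 𝓘} S(ρ‖δ)`, where the minimum
is (equivalently) restricted to those `δ` whose support contains the support of `ρ`,
on which `S(ρ‖δ) = Tr[ρ (log₂ ρ − log₂ δ)]` is finite. -/
noncomputable def Cr (ρ : Matrix ι ι ℂ) : ℝ :=
  sInf { r | ∃ δ, IsIncoherent δ ∧ (∀ v : ι → ℂ, δ.mulVec v = 0 → ρ.mulVec v = 0) ∧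
    r = ((ρ * (mlog2 ρ - mlog2 δ)).trace).re }

/-- Von Neumann entropy (base 2). -/
noncomputable def vN (σ : Matrix ι ι ℂ) : ℝ := -((σ * mlog2 σ).trace.re)

/-- The coherence of formation. -/
noncomputable def Cf (ρ : Matrix ι ι ℂ) : ℝ :=
  sInf { r | ∃ n p ψ, IsDecomposition ρ n p ψ ∧
    r = ∑ j, p j * vN (dephase (outer (ψ j))) }

/-- The set `A_ρ = { (1/t)[(1+t)Δ(ρ) − ρ] : t > 0, (1+t)Δ(ρ) − ρ ≥ 0 }`. -/
def Aset (ρ : Matrix ι ι ℂ) : Set (Matrix ι ι ℂ) :=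
  { σ | ∃ t : ℝ, 0 < t ∧ ((1 + t) • dephase ρ - ρ).PosSemidef ∧
      σ = t⁻¹ • ((1 + t) • dephase ρ - ρ) }

/-- The `n`-fold tensor power `ρ^{⊗ n}`. -/
def tpow (ρ : Matrix ι ι ℂ) (n : ℕ) : Matrix (Fin n → ι) (Fin n → ι) ℂ :=
  Matrix.of fun i j => ∏ t, ρ (i t) (j t)

end OneShot

/-!
If `ρ ≤ λ δ` and `σ ≤ λ δ'` with `δ, δ'` incoherent, then `a ρ + b σ ≤ λ (a δ + b δ')`, and
mixtures of incoherent states are incoherent; so every set `{ρ | λ ∈ cmaxFeasibleSet ρ}` is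
convex. Since `cmaxFeasibleSet ρ` is upward closed, `sInf (cmaxFeasibleSet ρ) ≤ m` holds iff it
contains every `λ > m`, so the sublevel sets of `C_max` on states are intersections of convex sets.
-/

namespace OneShot

variable {ι : Type*} [Fintype ι]

theorem convex_setOf_isState : Convex ℝ {ρ : Matrix ι ι ℂ | IsState ρ} := by
  intro x hx y hy a b ha hb hab
  refine ⟨(hx.1.smul ha).add (hy.1.smul hb), ?_⟩
  simp only [Matrix.trace_add, Matrix.trace_smul, hx.2, hy.2, Complex.real_smul, mul_one]
  exact_mod_cast hab

theorem convex_setOf_isIncoherent : Convex ℝ {δ : Matrix ι ι ℂ | IsIncoherent δ} :=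
  fun _ hx _ hy a b ha hb hab =>
    ⟨convex_setOf_isState hx.1 hy.1 ha hb hab, (hx.2.smul a).add (hy.2.smul b)⟩

theorem _root_.Matrix.IsHermitian.exists_posSemidef_smul_one_sub [DecidableEq ι]
    {A : Matrix ι ι ℂ} (hA : A.IsHermitian) :
    ∃ c : ℝ, 0 ≤ c ∧ (c • (1 : Matrix ι ι ℂ) - A).PosSemidef := by
  open scoped Matrix.Norms.L2Operator MatrixOrder in
  exact ⟨‖A‖, norm_nonneg A, by simpa [Matrix.le_iff, Algebra.algebraMap_eq_smul_one] using
    IsSelfAdjoint.le_algebraMap_norm_self (a := A) hA⟩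

theorem IsState.nonempty {ρ : Matrix ι ι ℂ} (hρ : IsState ρ) : Nonempty ι := by
  by_contra h
  have := not_nonempty_iff.1 h
  simpa [Matrix.trace_eq_zero_of_isEmpty] using hρ.2

theorem isIncoherent_inv_card_smul_one [DecidableEq ι] [Nonempty ι] :
    IsIncoherent ((Fintype.card ι : ℝ)⁻¹ • (1 : Matrix ι ι ℂ)) := by
  refine ⟨⟨Matrix.PosSemidef.one.smul (by positivity), ?_⟩, Matrix.isDiag_one.smul _⟩
  simp [Matrix.trace_one, Complex.real_smul]

/-- `Cmax ρ` is `log₂` of the infimum of this set. -/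
def cmaxFeasibleSet (ρ : Matrix ι ι ℂ) : Set ℝ :=
  {l : ℝ | 0 ≤ l ∧ ∃ δ, IsIncoherent δ ∧ (l • δ - ρ).PosSemidef}

theorem cmaxFeasibleSet_nonempty {ρ : Matrix ι ι ℂ} (hρ : IsState ρ) :
    (cmaxFeasibleSet ρ).Nonempty := by
  classical
  have := hρ.nonempty
  obtain ⟨c, hc0, hc⟩ := hρ.1.1.exists_posSemidef_smul_one_sub
  refine ⟨c * Fintype.card ι, by positivity, _, isIncoherent_inv_card_smul_one, ?_⟩
  rwa [smul_smul, mul_assoc, mul_inv_cancel₀ (by positivity), mul_one]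

theorem one_le_of_mem_cmaxFeasibleSet {ρ : Matrix ι ι ℂ} (hρ : ρ.trace = 1) {l : ℝ}
    (hl : l ∈ cmaxFeasibleSet ρ) : 1 ≤ l := by
  obtain ⟨-, δ, hδ, hle⟩ := hl
  have := hle.trace_nonneg
  rw [Matrix.trace_sub, Matrix.trace_smul, hδ.1.2, hρ, Complex.real_smul, mul_one,
    ← Complex.ofReal_one, ← Complex.ofReal_sub, Complex.zero_le_real] at this
  linarith

theorem mem_cmaxFeasibleSet_of_le {ρ : Matrix ι ι ℂ} {l m : ℝ} (hl : l ∈ cmaxFeasibleSet ρ)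
    (hlm : l ≤ m) : m ∈ cmaxFeasibleSet ρ := by
  obtain ⟨hl0, δ, hδ, hle⟩ := hl
  refine ⟨hl0.trans hlm, δ, hδ, ?_⟩
  have hsplit : m • δ - ρ = (m - l) • δ + (l • δ - ρ) := by module
  rw [hsplit]
  exact (hδ.1.1.smul (sub_nonneg.2 hlm)).add hle

theorem convex_setOf_mem_cmaxFeasibleSet (l : ℝ) :
    Convex ℝ {ρ : Matrix ι ι ℂ | l ∈ cmaxFeasibleSet ρ} := by
  rintro x ⟨hl, δ, hδ, hx⟩ y ⟨-, δ', hδ', hy⟩ a b ha hb hab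
  refine ⟨hl, a • δ + b • δ', convex_setOf_isIncoherent hδ hδ' ha hb hab, ?_⟩
  have hsplit : l • (a • δ + b • δ') - (a • x + b • y) = a • (l • δ - x) + b • (l • δ' - y) := by
    module
  rw [hsplit]
  exact (hx.smul ha).add (hy.smul hb)

theorem one_le_sInf_cmaxFeasibleSet {ρ : Matrix ι ι ℂ} (hρ : IsState ρ) :
    1 ≤ sInf (cmaxFeasibleSet ρ) :=
  le_csInf (cmaxFeasibleSet_nonempty hρ) fun _ => one_le_of_mem_cmaxFeasibleSet hρ.2

theorem mem_cmaxFeasibleSet_of_sInf_lt {ρ : Matrix ι ι ℂ} (hρ : IsState ρ) {m : ℝ}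
    (hm : sInf (cmaxFeasibleSet ρ) < m) : m ∈ cmaxFeasibleSet ρ := by
  obtain ⟨l, hl, hlm⟩ := exists_lt_of_csInf_lt (cmaxFeasibleSet_nonempty hρ) hm
  exact mem_cmaxFeasibleSet_of_le hl hlm.le

theorem convex_setOf_sInf_cmaxFeasibleSet_le (m : ℝ) :
    Convex ℝ {ρ : Matrix ι ι ℂ | IsState ρ ∧ sInf (cmaxFeasibleSet ρ) ≤ m} := by
  rintro x ⟨hx, hxm⟩ y ⟨hy, hym⟩ a b ha hb hab
  refine ⟨convex_setOf_isState hx hy ha hb hab, le_of_forall_gt_imp_ge_of_dense fun m' hm' => ?_⟩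
  refine csInf_le ⟨0, fun _ hl => hl.1⟩ (convex_setOf_mem_cmaxFeasibleSet m' ?_ ?_ ha hb hab)
  · exact mem_cmaxFeasibleSet_of_sInf_lt hx (hxm.trans_lt hm')
  · exact mem_cmaxFeasibleSet_of_sInf_lt hy (hym.trans_lt hm')

theorem Cmax_le_iff {ρ : Matrix ι ι ℂ} (hρ : IsState ρ) {c : ℝ} :
    Cmax ρ ≤ c ↔ sInf (cmaxFeasibleSet ρ) ≤ 2 ^ c :=
  Real.logb_le_iff_le_rpow one_lt_two (one_pos.trans_le (one_le_sInf_cmaxFeasibleSet hρ))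

theorem quasiconvexOn_Cmax : QuasiconvexOn ℝ {ρ : Matrix ι ι ℂ | IsState ρ} Cmax := by
  intro c
  convert convex_setOf_sInf_cmaxFeasibleSet_le (ι := ι) (2 ^ c) using 1
  ext ρ
  exact and_congr_right fun hρ => Cmax_le_iff hρ

/-- `C_max` is quasiconvex. -/
theorem Cmax_quasiconvex {d : ℕ} (n : ℕ) (hn : 0 < n) (p : Fin n → ℝ)
    (ρ : Fin n → Matrix (Fin d) (Fin d) ℂ)
    (hp : ∀ i, 0 ≤ p i) (hp1 : ∑ i, p i = 1) (hρ : ∀ i, IsState (ρ i)) :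
    Cmax (∑ i, p i • ρ i) ≤
      Finset.univ.sup' ⟨⟨0, hn⟩, Finset.mem_univ _⟩ (fun i => Cmax (ρ i)) :=
  (quasiconvexOn_Cmax _ |>.sum_mem (fun i _ => hp i) hp1
    fun i _ => ⟨hρ i, Finset.le_sup' (fun i => Cmax (ρ i)) (Finset.mem_univ i)⟩).2

end OneShot
end

section
/- The monotone C_{Δ,max} admits the simplified form: for every state ρ, min over σ in the closure of A_ρ of D_max(ρ||σ) equals log₂ min{λ ≥ 0 : ρ ≤ λΔ(ρ) in the Loewner order}. -/
open scoped Matrix ComplexOrder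

/-!
Each element of `A_ρ` is `Δ(ρ) + s (Δ(ρ) - ρ)` with `s = 1/t`, so `Ā_ρ` lies on the closed ray
from `Δ(ρ)` in the direction `Δ(ρ) - ρ`, and it contains the endpoint `Δ(ρ)` as soon as
`ρ ≤ λ Δ(ρ)` for some `λ`. Conversely no point of the ray does better than its endpoint:
`ρ ≤ l σ` with `σ` on the ray already gives `ρ ≤ l Δ(ρ)`. Hence both minimisations run over the
same set of `λ`.
-/

open Filter Topology

lemma isClosed_image_Ici_add_smul {E : Type*} [AddCommGroup E] [TopologicalSpace E]
    [IsTopologicalAddGroup E] [Module ℝ E] [ContinuousSMul ℝ E] [T2Space E] (a v : E) :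
    IsClosed ((fun s : ℝ => a + s • v) '' Set.Ici 0) := by
  change IsClosed (((a + ·) ∘ (· • v)) '' Set.Ici (0 : ℝ))
  rw [Set.image_comp]
  exact (Homeomorph.addLeft a).isClosedMap _ (isClosedMap_smul_left v _ isClosed_Ici)

namespace OneShot

variable {ι : Type*} [DecidableEq ι]

lemma posSemidef_dephase [Fintype ι] {A : Matrix ι ι ℂ} (hA : A.PosSemidef) :
    (dephase A).PosSemidef :=
  Matrix.PosSemidef.diagonal fun _ => hA.diag_nonneg

@[simp]
lemma trace_dephase [Fintype ι] (A : Matrix ι ι ℂ) : (dephase A).trace = A.trace :=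
  Matrix.trace_diagonal _

def dephaseRay (ρ : Matrix ι ι ℂ) : Set (Matrix ι ι ℂ) :=
  (fun s : ℝ => dephase ρ + s • (dephase ρ - ρ)) '' Set.Ici 0

lemma Aset_subset_dephaseRay (ρ : Matrix ι ι ℂ) : Aset ρ ⊆ dephaseRay ρ := by
  rintro σ ⟨t, ht, -, rfl⟩
  refine ⟨t⁻¹, inv_nonneg.2 ht.le, ?_⟩
  have : t ≠ 0 := ht.ne'
  match_scalars <;> field_simp
  ring

lemma closure_Aset_subset_dephaseRay (ρ : Matrix ι ι ℂ) : closure (Aset ρ) ⊆ dephaseRay ρ :=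
  closure_minimal (Aset_subset_dephaseRay ρ) (isClosed_image_Ici_add_smul _ _)

lemma dephase_mem_closure_Aset [Fintype ι] {ρ : Matrix ι ι ℂ} (hρ : ρ.PosSemidef) {l : ℝ}
    (hl : (l • dephase ρ - ρ).PosSemidef) : dephase ρ ∈ closure (Aset ρ) := by
  have hlim : Tendsto (fun t : ℝ => dephase ρ + t⁻¹ • (dephase ρ - ρ)) atTop
      (𝓝 (dephase ρ)) := by
    simpa using tendsto_const_nhds.add
      ((tendsto_inv_atTop_zero (𝕜 := ℝ)).smul_const (dephase ρ - ρ))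
  refine mem_closure_of_tendsto hlim ?_
  filter_upwards [eventually_gt_atTop (max l 0)] with t ht
  have ht0 : 0 < t := (le_max_right l 0).trans_lt ht
  have hpsd : ((1 + t) • dephase ρ - ρ).PosSemidef := by
    have hsplit : (1 + t) • dephase ρ - ρ = (l • dephase ρ - ρ) + (1 + t - l) • dephase ρ := by
      module
    rw [hsplit]
    exact hl.add ((posSemidef_dephase hρ).smul (by linarith [le_max_left l 0]))
  refine ⟨t, ht0, hpsd, ?_⟩
  have : t ≠ 0 := ht0.ne'
  match_scalars <;> field_simp
  ring

lemma posSemidef_smul_dephase_sub_of_mem_dephaseRay [Fintype ι] {ρ σ : Matrix ι ι ℂ}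
    (hρ : IsState ρ) (hσ : σ ∈ dephaseRay ρ) {l : ℝ} (hl : 0 ≤ l)
    (hlσ : (l • σ - ρ).PosSemidef) : (l • dephase ρ - ρ).PosSemidef := by
  obtain ⟨s, hs : 0 ≤ s, rfl⟩ := hσ
  have htr : (0 : ℂ) ≤ ((l - 1 : ℝ) : ℂ) := by
    simpa [Matrix.trace_smul, hρ.2, Complex.real_smul] using hlσ.trace_nonneg
  have hl1 : 1 ≤ l := by linarith [Complex.zero_le_real.mp htr]
  have hls : 0 < 1 + l * s := by positivity
  -- the trace bound `l ≥ 1` is what makes the correction term `l s (l - 1) Δ(ρ)` positive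
  have hkey : l • dephase ρ - ρ = (1 + l * s)⁻¹ •
      ((l • (dephase ρ + s • (dephase ρ - ρ)) - ρ) + (l * s * (l - 1)) • dephase ρ) := by
    rw [eq_inv_smul_iff₀ hls.ne']
    module
  rw [hkey]
  have hcorr : 0 ≤ l * s * (l - 1) := mul_nonneg (mul_nonneg hl hs) (by linarith)
  exact (hlσ.add ((posSemidef_dephase hρ.1).smul hcorr)).smul (inv_nonneg.2 hls.le)

/-- `C_{Δ,max}` admits the simplified form:
`min_{σ ∈ closure A_ρ} D_max(ρ‖σ) = log₂ min {λ ≥ 0 : ρ ≤ λ Δ(ρ)}`. -/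
theorem CDmax_simplified_form {d : ℕ} (ρ : Matrix (Fin d) (Fin d) ℂ) (hρ : IsState ρ) :
    Real.logb 2 (sInf {l : ℝ | 0 ≤ l ∧ ∃ σ ∈ closure (Aset ρ), (l • σ - ρ).PosSemidef}) =
      CDmax ρ := by
  suffices {l : ℝ | 0 ≤ l ∧ ∃ σ ∈ closure (Aset ρ), (l • σ - ρ).PosSemidef} =
      {l : ℝ | 0 ≤ l ∧ (l • dephase ρ - ρ).PosSemidef} by
    rw [CDmax, this]
  ext l
  refine ⟨fun ⟨hl, σ, hσ, hlσ⟩ => ⟨hl, ?_⟩, fun ⟨hl, hlΔ⟩ => ⟨hl, ?_⟩⟩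
  · exact posSemidef_smul_dephase_sub_of_mem_dephaseRay hρ
      (closure_Aset_subset_dephaseRay ρ hσ) hl hlσ
  · exact ⟨dephase ρ, dephase_mem_closure_Aset hρ.1 hlΔ, hlΔ⟩

end OneShot
end

section
/- C_{Δ,max} is monotone under dephasing-covariant incoherent operations: if Λ is a completely positive trace-preserving map on d×d complex matrices satisfying Λ(Δ(ρ)) = Δ(Λ(ρ)) for all states ρ, then for every state ρ one has C_{Δ,max}(Λ(ρ)) ≤ C_{Δ,max}(ρ). -/
open scoped Matrix ComplexOrder

namespace OneShot

variable {ι κ : Type*} [Fintype ι] [DecidableEq ι] [Fintype κ] [DecidableEq κ]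

/-!
If `ρ ≤ λ Δ(ρ)`, applying the positive map `Λ` and using `Λ ∘ Δ = Δ ∘ Λ` at `ρ` gives
`Λ ρ ≤ λ Δ(Λ ρ)`: every `λ` feasible for `ρ` is feasible for `Λ ρ`, so the infimum can only drop.
The feasible set of `ρ` is nonempty because `ρ ≤ d Δ(ρ)`, which follows from writing
`d Δ(ρ) - ρ` as a sum of conjugates of `ρ`, and its infimum is at least `1` by taking traces.
-/

open Matrix

lemma CompletelyPositive.posSemidef_map {n m : Type*} [Fintype n] [Fintype m]
    {Λ : Matrix n n ℂ →ₗ[ℂ] Matrix m m ℂ} (hΛ : CompletelyPositive Λ) {A : Matrix n n ℂ}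
    (hA : A.PosSemidef) : (Λ A).PosSemidef := by
  have h := hΛ 1 (A.submatrix Prod.snd Prod.snd) (hA.submatrix _)
  exact h.submatrix fun i => ((0 : Fin 1), i)

section dephase

variable {n : Type*} [Fintype n] [DecidableEq n]

lemma trace_dephase_s4 (ρ : Matrix n n ℂ) : (dephase ρ).trace = ρ.trace :=
  trace_diagonal _

/-- Conjugation by `diagonal (eᵢ - eⱼ)` keeps the `{i, j}` principal block of `ρ` with its
off-diagonal entries negated; summed over all pairs this gives `2 (n Δ(ρ) - ρ)`. -/
lemma sum_diagonal_single_sub_single_conj (ρ : Matrix n n ℂ) :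
    ∑ i, ∑ j, diagonal (Pi.single i 1 - Pi.single j 1) * ρ *
        (diagonal (Pi.single i 1 - Pi.single j 1))ᴴ =
      (2 : ℂ) • ((Fintype.card n : ℂ) • dephase ρ - ρ) := by
  ext a b
  rcases eq_or_ne a b with rfl | hab <;>
    simp only [diagonal_conjTranspose, Matrix.sum_apply, diagonal_mul, mul_diagonal,
      Matrix.smul_apply, Matrix.sub_apply, dephase, diagonal_apply, Pi.sub_apply, Pi.star_apply,
      Pi.single_apply, star_sub, RCLike.star_def, MonoidWithZeroHom.map_ite_one_zero, sub_mul,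
      mul_sub, ite_mul, mul_ite, one_mul, mul_one, zero_mul, mul_zero, Finset.sum_sub_distrib,
      Finset.sum_ite_irrel, Finset.sum_const, Finset.card_univ, nsmul_eq_mul,
      Finset.sum_ite_eq, Finset.mem_univ, if_true, if_false, smul_eq_mul, *] <;>
    ring

lemma posSemidef_card_smul_dephase_sub {ρ : Matrix n n ℂ} (hρ : ρ.PosSemidef) :
    ((Fintype.card n : ℝ) • dephase ρ - ρ).PosSemidef := by
  have hsum := posSemidef_sum Finset.univ fun i _ =>
    posSemidef_sum Finset.univ fun j _ =>
      hρ.mul_mul_conjTranspose_same (diagonal (Pi.single i 1 - Pi.single j 1 : n → ℂ))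
  rw [sum_diagonal_single_sub_single_conj] at hsum
  simpa [RCLike.real_smul_eq_coe_smul (K := ℂ)] using
    hsum.smul (show (0 : ℂ) ≤ 2⁻¹ by positivity)

def cdmaxSet (ρ : Matrix n n ℂ) : Set ℝ :=
  {l : ℝ | 0 ≤ l ∧ (l • dephase ρ - ρ).PosSemidef}

lemma cdmaxSet_nonempty {ρ : Matrix n n ℂ} (hρ : ρ.PosSemidef) : (cdmaxSet ρ).Nonempty :=
  ⟨Fintype.card n, Nat.cast_nonneg _, posSemidef_card_smul_dephase_sub hρ⟩

lemma one_le_of_mem_cdmaxSet {ρ : Matrix n n ℂ} (hρ : ρ.trace = 1) {l : ℝ}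
    (hl : l ∈ cdmaxSet ρ) : 1 ≤ l := by
  have h := hl.2.trace_nonneg
  rw [trace_sub, trace_smul, trace_dephase_s4, hρ, RCLike.real_smul_eq_coe_smul (K := ℂ),
    smul_eq_mul, mul_one, sub_nonneg] at h
  simpa using (Complex.le_def.mp h).1

lemma cdmaxSet_subset_map {Λ : Matrix n n ℂ →ₗ[ℂ] Matrix n n ℂ} (hΛ : CompletelyPositive Λ)
    {ρ : Matrix n n ℂ} (hcov : Λ (dephase ρ) = dephase (Λ ρ)) :
    cdmaxSet ρ ⊆ cdmaxSet (Λ ρ) := by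
  rintro l ⟨hl, hpsd⟩
  refine ⟨hl, ?_⟩
  have h := hΛ.posSemidef_map hpsd
  rwa [map_sub, ← algebraMap_smul ℂ, map_smul, hcov, algebraMap_smul] at h

end dephase

lemma _root_.Real.logb_le_logb_of_nonneg_of_one_le {b x y : ℝ} (hb : 1 < b) (hx : 0 ≤ x)
    (hxy : x ≤ y) (hy : 1 ≤ y) : Real.logb b x ≤ Real.logb b y := by
  rcases hx.eq_or_lt with rfl | hx
  · simpa using Real.logb_nonneg hb hy
  · exact Real.logb_le_logb_of_le hb hx hxy

theorem CDmax_DIO_monotone_general {d : ℕ}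
    (Λ : Matrix (Fin d) (Fin d) ℂ →ₗ[ℂ] Matrix (Fin d) (Fin d) ℂ)
    (hCP : CompletelyPositive Λ)
    (hcov : ∀ ρ : Matrix (Fin d) (Fin d) ℂ, IsState ρ → Λ (dephase ρ) = dephase (Λ ρ))
    (ρ : Matrix (Fin d) (Fin d) ℂ) (hρ : IsState ρ) :
    CDmax (Λ ρ) ≤ CDmax ρ := by
  have hne := cdmaxSet_nonempty hρ.1
  have hle : sInf (cdmaxSet (Λ ρ)) ≤ sInf (cdmaxSet ρ) :=
    csInf_le_csInf ⟨0, fun _ hl => hl.1⟩ hne (cdmaxSet_subset_map hCP (hcov ρ hρ))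
  have hone : 1 ≤ sInf (cdmaxSet ρ) :=
    le_csInf hne fun _ hl => one_le_of_mem_cdmaxSet hρ.2 hl
  exact Real.logb_le_logb_of_nonneg_of_one_le one_lt_two
    (Real.sInf_nonneg fun _ hl => hl.1) hle hone

/-- `C_{Δ,max}` is monotone under dephasing-covariant incoherent operations. -/
theorem CDmax_DIO_monotone {d : ℕ}
    (Λ : Matrix (Fin d) (Fin d) ℂ →ₗ[ℂ] Matrix (Fin d) (Fin d) ℂ)
    (hCP : CompletelyPositive Λ) (hTP : TracePreserving Λ)
    (hcov : ∀ ρ : Matrix (Fin d) (Fin d) ℂ, IsState ρ → Λ (dephase ρ) = dephase (Λ ρ))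
    (ρ : Matrix (Fin d) (Fin d) ℂ) (hρ : IsState ρ) :
    CDmax (Λ ρ) ≤ CDmax ρ :=
  CDmax_DIO_monotone_general Λ hCP hcov ρ hρ

end OneShot
end

section
/- C_0 violates convexity: in dimension d = 3, for ρ₁ = (1/3)(|0⟩+|1⟩+|2⟩)(⟨0|+⟨1|+⟨2|), ρ₂ = (1/3)(|0⟩⟨0|+|1⟩⟨1|+|2⟩⟨2|), and ρ = (1/2)ρ₁ + (1/2)ρ₂, one has (1/2)C_0(ρ₁) + (1/2)C_0(ρ₂) = (1/2)log₂3 < log₂2 ≤ C_0(ρ); in particular C_0(ρ) > (1/2)C_0(ρ₁) + (1/2)C_0(ρ₂). -/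
open scoped Matrix ComplexOrder

namespace OneShot

variable {ι κ : Type*} [Fintype ι] [DecidableEq ι] [Fintype κ] [DecidableEq κ]

/-- `ρ₁ = (1/3)(|0⟩+|1⟩+|2⟩)(⟨0|+⟨1|+⟨2|)`. -/
noncomputable def rho1 : Matrix (Fin 3) (Fin 3) ℂ := Matrix.of fun _ _ => 1 / 3

/-- `ρ₂ = (1/3)(|0⟩⟨0|+|1⟩⟨1|+|2⟩⟨2|)`. -/
noncomputable def rho2 : Matrix (Fin 3) (Fin 3) ℂ := (1 / 3 : ℂ) • 1

/-- `ρ = (1/2)ρ₁ + (1/2)ρ₂`. -/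
noncomputable def rhoMix : Matrix (Fin 3) (Fin 3) ℂ := (1 / 2 : ℂ) • rho1 + (1 / 2 : ℂ) • rho2


end OneShot

/-! Since `Σ_j p_j |ψ_j(a) - ψ_j(b)|² = ⟨a - b| ρ |a - b⟩`, every vector of a decomposition of
`ρ₁` is constant, so `C₀(ρ₁) = log₂ 3`; the basis decomposition gives `C₀(ρ₂) = 0`. The entry
`ρ₀₁ = Σ_j p_j ψ_j(0) ψ_j(1)*` of the mixture is nonzero, so every decomposition of it contains a
vector with two nonzero coordinates, whence `C₀(ρ) ≥ 1 > (1/2) log₂ 3`. -/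

namespace OneShot.IsDecomposition

variable {ι : Type*} [Fintype ι] {ρ σ : Matrix ι ι ℂ} {n m : ℕ} {p : Fin n → ℝ}
  {ψ : Fin n → ι → ℂ}

theorem apply (h : IsDecomposition ρ n p ψ) (a b : ι) :
    ρ a b = ∑ j, (p j : ℂ) * (ψ j a * star (ψ j b)) := by
  simp [h.2.2.2, outer, Matrix.sum_apply, Complex.real_smul]

theorem nonempty (h : IsDecomposition ρ n p ψ) : Nonempty (Fin n) := by
  by_contra hn
  have := h.2.1
  simp [not_nonempty_iff.mp hn] at this

theorem exists_ne_zero (h : IsDecomposition ρ n p ψ) (j : Fin n) : ∃ i, ψ j i ≠ 0 := by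
  by_contra! h0
  simpa [h0] using h.2.2.1 j

theorem sum_mul_normSq_sub (h : IsDecomposition ρ n p ψ) (a b : ι) :
    ((∑ j, p j * Complex.normSq (ψ j a - ψ j b) : ℝ) : ℂ) =
      ρ a a - ρ a b - ρ b a + ρ b b := by
  simp only [h.apply, ← Finset.sum_sub_distrib, ← Finset.sum_add_distrib, Complex.ofReal_sum,
    Complex.ofReal_mul, Complex.normSq_eq_conj_mul_self, map_sub]
  refine Finset.sum_congr rfl fun j _ => ?_
  simp only [Complex.star_def]
  ring

theorem apply_eq_apply (h : IsDecomposition ρ n p ψ) {a b : ι}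
    (hab : ρ a a + ρ b b = ρ a b + ρ b a) (j : Fin n) : ψ j a = ψ j b := by
  have hsum : ((∑ j, p j * Complex.normSq (ψ j a - ψ j b) : ℝ) : ℂ) = 0 :=
    (h.sum_mul_normSq_sub a b).trans (by linear_combination hab)
  rw [Complex.ofReal_eq_zero] at hsum
  have hj := (Finset.sum_eq_zero_iff_of_nonneg fun j _ =>
    mul_nonneg (h.1 j).le (Complex.normSq_nonneg _)).mp hsum j (Finset.mem_univ j)
  rw [mul_eq_zero, Complex.normSq_eq_zero, sub_eq_zero] at hj
  exact hj.resolve_left (h.1 j).ne'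

theorem exists_two_le_T (h : IsDecomposition ρ n p ψ) {a b : ι} (hab : a ≠ b)
    (hρ : ρ a b ≠ 0) : ∃ j, 2 ≤ T (ψ j) := by
  rw [h.apply] at hρ
  obtain ⟨j, -, hj⟩ := Finset.exists_ne_zero_of_sum_ne_zero hρ
  refine ⟨j, Finset.one_lt_card.mpr ⟨a, ?_, b, ?_, hab⟩⟩ <;>
    simp only [Finset.mem_filter, Finset.mem_univ, true_and, ne_eq] <;>
    rintro h0 <;> simp [h0] at hj

theorem mix {φ : Fin m → ι → ℂ} {q : Fin m → ℝ} (hρ : IsDecomposition ρ n p ψ)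
    (hσ : IsDecomposition σ m q φ) {t : ℝ} (ht₀ : 0 < t) (ht₁ : t < 1) :
    IsDecomposition (t • ρ + (1 - t) • σ) (n + m) (Fin.append (t • p) ((1 - t) • q))
      (Fin.append ψ φ) := by
  refine ⟨fun j => ?_, ?_, fun j => ?_, ?_⟩
  · cases j using Fin.addCases
    · simpa using mul_pos ht₀ (hρ.1 _)
    · simpa using mul_pos (sub_pos.mpr ht₁) (hσ.1 _)
  · simp [Fin.sum_univ_add, ← Finset.mul_sum, hρ.2.1, hσ.2.1]
  · cases j using Fin.addCases
    · simpa using hρ.2.2.1 _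
    · simpa using hσ.2.2.1 _
  · simp [Fin.sum_univ_add, hρ.2.2.2, hσ.2.2.2, Finset.smul_sum, smul_smul]

end OneShot.IsDecomposition

namespace OneShot

section Decompositions

variable {ι : Type*} [Fintype ι]

theorem isDecomposition_outer {ψ : ι → ℂ} (hψ : ∑ i, Complex.normSq (ψ i) = 1) :
    IsDecomposition (outer ψ) 1 (fun _ => 1) (fun _ => ψ) :=
  ⟨fun _ => one_pos, by simp, fun _ => hψ, by simp⟩

theorem isDecomposition_diagonal {n : ℕ} {w : Fin n → ℝ} (hw : ∀ i, 0 < w i)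
    (hs : ∑ i, w i = 1) :
    IsDecomposition (Matrix.diagonal fun i => (w i : ℂ)) n w fun j => Pi.single j 1 := by
  refine ⟨hw, hs, fun j => by simp [Pi.single_apply], ?_⟩
  ext a b
  by_cases hab : a = b
  · subst hab; simp [outer, Matrix.sum_apply, Pi.single_apply, Complex.real_smul]
  · simp [outer, Matrix.sum_apply, Pi.single_apply, hab]

theorem T_eq_card {ψ : ι → ℂ} (hψ : ∀ i, ψ i ≠ 0) : T ψ = Fintype.card ι := by
  simp [T, hψ]

theorem T_single [DecidableEq ι] (i : ι) : T (Pi.single i (1 : ℂ)) = 1 := by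
  simp [T, Pi.single_apply, Finset.filter_eq']

end Decompositions

section C0

variable {ι : Type*} [Fintype ι] {ρ : Matrix ι ι ℂ}

theorem logb_two_natCast_nonneg (k : ℕ) : 0 ≤ Real.logb 2 k :=
  div_nonneg (Real.log_natCast_nonneg k) (Real.log_nonneg one_le_two)

theorem C0_nonneg (ρ : Matrix ι ι ℂ) : 0 ≤ C0 ρ :=
  Real.sInf_nonneg fun _ ⟨_, _, _, _, hr⟩ => hr ▸ logb_two_natCast_nonneg _

theorem C0_le {n : ℕ} {p : Fin n → ℝ} {ψ : Fin n → ι → ℂ} (h : IsDecomposition ρ n p ψ) :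
    C0 ρ ≤ Real.logb 2 (Finset.univ.sup fun j => T (ψ j) : ℕ) :=
  csInf_le ⟨0, fun _ ⟨_, _, _, _, hr⟩ => hr ▸ logb_two_natCast_nonneg _⟩ ⟨n, p, ψ, h, rfl⟩

theorem le_C0 {k : ℕ} (hne : ∃ n p ψ, IsDecomposition ρ n p ψ)
    (h : ∀ n p ψ, IsDecomposition ρ n p ψ → ∃ j, k ≤ T (ψ j)) : Real.logb 2 k ≤ C0 ρ := by
  obtain ⟨n, p, ψ, hd⟩ := hne
  refine le_csInf ⟨_, n, p, ψ, hd, rfl⟩ ?_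
  rintro _ ⟨n, p, ψ, hd, rfl⟩
  obtain ⟨j, hj⟩ := h n p ψ hd
  rcases k.eq_zero_or_pos with rfl | hk
  · simpa using logb_two_natCast_nonneg _
  exact Real.logb_le_logb_of_le one_lt_two (by positivity)
    (by exact_mod_cast hj.trans (Finset.le_sup (f := fun j => T (ψ j)) (Finset.mem_univ j)))

end C0

theorem isDecomposition_rho1 :
    IsDecomposition rho1 1 (fun _ => 1) fun _ _ => ((√3 : ℝ) : ℂ)⁻¹ := by
  convert isDecomposition_outer (ψ := fun _ : Fin 3 => ((√3 : ℝ) : ℂ)⁻¹) (by simp) using 1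
  ext
  simp [rho1, outer, ← mul_inv, ← Complex.ofReal_mul]

theorem isDecomposition_rho2 : IsDecomposition rho2 3 (fun _ => 1 / 3) fun j => Pi.single j 1 := by
  convert isDecomposition_diagonal (w := fun _ : Fin 3 => 1 / 3) (by norm_num) (by norm_num)
    using 1
  ext a b
  simp [rho2, Matrix.one_apply, Matrix.diagonal_apply]

theorem C0_rho1 : C0 rho1 = Real.logb 2 3 := by
  refine le_antisymm ?_ (le_C0 ⟨_, _, _, isDecomposition_rho1⟩ fun n p ψ hd => ?_)
  · simpa [T_eq_card] using C0_le isDecomposition_rho1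
  obtain ⟨j⟩ := hd.nonempty
  obtain ⟨i, hi⟩ := hd.exists_ne_zero j
  refine ⟨j, (T_eq_card (ψ := ψ j) fun i' => ?_).ge⟩
  rwa [hd.apply_eq_apply (by simp [rho1]) j]

theorem C0_rho2 : C0 rho2 = 0 :=
  le_antisymm
    (by simpa [T_single, Finset.sup_const Finset.univ_nonempty] using C0_le isDecomposition_rho2)
    (C0_nonneg _)

theorem rhoMix_eq : rhoMix = (1 / 2 : ℝ) • rho1 + (1 - 1 / 2 : ℝ) • rho2 := by
  ext a b
  norm_num [rhoMix, Complex.real_smul]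

theorem logb_two_le_C0_rhoMix : Real.logb 2 2 ≤ C0 rhoMix := by
  have hdec := rhoMix_eq ▸
    isDecomposition_rho1.mix isDecomposition_rho2 (by norm_num) (by norm_num)
  exact le_C0 ⟨_, _, _, hdec⟩ fun n p ψ hd =>
    hd.exists_two_le_T (a := 0) (b := 1) (by decide) (by simp [rhoMix, rho1, rho2])

/-- `C_0` violates convexity. -/
theorem C0_not_convex :
    (1 / 2) * C0 rho1 + (1 / 2) * C0 rho2 = (1 / 2) * Real.logb 2 3 ∧
    (1 / 2) * Real.logb 2 3 < Real.logb 2 2 ∧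
    Real.logb 2 2 ≤ C0 rhoMix ∧
    (1 / 2) * C0 rho1 + (1 / 2) * C0 rho2 < C0 rhoMix := by
  have hconv : (1 / 2) * C0 rho1 + (1 / 2) * C0 rho2 = (1 / 2) * Real.logb 2 3 := by
    rw [C0_rho1, C0_rho2]; ring
  have hgap : (1 / 2) * Real.logb 2 3 < Real.logb 2 2 := by
    have hlt : Real.logb 2 3 < 2 :=
      (Real.logb_lt_iff_lt_rpow one_lt_two (by norm_num)).mpr (by norm_num)
    rw [Real.logb_self_eq_one one_lt_two]
    linarith
  exact ⟨hconv, hgap, logb_two_le_C0_rhoMix, hconv ▸ hgap.trans_le logb_two_le_C0_rhoMix⟩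

end OneShot
end

section
/- An incoherent-preserving Kraus operator does not increase the coherence rank of a pure state: if K is an incoherent-preserving d×d matrix and |φ⟩ is a unit vector with K|φ⟩ ≠ 0, then the number of nonzero computational-basis coefficients of K|φ⟩ is at most the number of nonzero computational-basis coefficients of |φ⟩; equivalently, for the normalized state |ψ⟩ = K|φ⟩/‖K|φ⟩‖ one has log₂ T(ψ) ≤ log₂ T(φ). -/
open scoped Matrix ComplexOrder

/-!
Feeding `K` the incoherent state `|i⟩⟨i|` gives `K |i⟩⟨i| Kᴴ = |Kᵢ⟩⟨Kᵢ|` for the `i`-th column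
`Kᵢ`, and this is diagonal only if `Kᵢ` has at most one nonzero entry. So every nonzero
coefficient of `Kφ` is hit by the column of some `i` with `φ i ≠ 0`, and each such column hits
at most one coefficient.
-/

namespace OneShot

open Finset

variable {ι κ : Type*} [Fintype ι] [Fintype κ]

lemma card_support_mulVec_le [DecidableEq κ] {R : Type*} [NonUnitalNonAssocSemiring R]
    [DecidableEq R]
    (K : Matrix κ ι R) (hK : ∀ i k l, K k i ≠ 0 → K l i ≠ 0 → k = l) (v : ι → R) :
    #{k | (K *ᵥ v) k ≠ 0} ≤ #{i | v i ≠ 0} := by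
  have hsub : ({k | (K *ᵥ v) k ≠ 0} : Finset κ) ⊆
      ({i | v i ≠ 0} : Finset ι).biUnion fun i => {k | K k i ≠ 0} := by
    intro k hk
    obtain ⟨i, -, hi⟩ := exists_ne_zero_of_sum_ne_zero (mem_filter.1 hk).2
    simp only [mem_biUnion, mem_filter, mem_univ, true_and]
    exact ⟨i, right_ne_zero_of_mul hi, left_ne_zero_of_mul hi⟩
  calc #{k | (K *ᵥ v) k ≠ 0} ≤ #{i | v i ≠ 0} * 1 :=
        (card_le_card hsub).trans <| card_biUnion_le_card_mul _ _ _ fun i _ =>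
          card_le_one.2 fun k hk l hl => hK i k l (mem_filter.1 hk).2 (mem_filter.1 hl).2
    _ = #{i | v i ≠ 0} := mul_one _

lemma IncoherentPreserving.eq_of_ne_zero [DecidableEq ι] {K : Matrix κ ι ℂ}
    (hK : IncoherentPreserving K)
    {i : ι} {k l : κ} (hk : K k i ≠ 0) (hl : K l i ≠ 0) : k = l := by
  let δ : Matrix ι ι ℂ := Matrix.diagonal (Pi.single i 1)
  have hδ : IsIncoherent δ := by
    refine ⟨⟨Matrix.posSemidef_diagonal_iff.2 fun j => ?_, by simp [δ, Matrix.trace_diagonal]⟩,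
      Matrix.isDiag_diagonal _⟩
    by_cases hj : j = i <;> simp [hj]
  obtain ⟨c, -, δ', ⟨-, hdiag⟩, hKδ⟩ := hK δ hδ
  have hentry : (K * δ * Kᴴ) k l = K k i * star (K l i) := by
    simp [δ, Matrix.mul_apply, Matrix.diagonal_apply, Pi.single_apply]
  by_contra hkl
  have : K k i * star (K l i) = 0 := by
    rw [← hentry, hKδ, Matrix.smul_apply, hdiag hkl, smul_zero]
  exact mul_ne_zero hk (star_ne_zero.2 hl) this

lemma T_mulVec_le {K : Matrix κ ι ℂ} (hK : IncoherentPreserving K) (v : ι → ℂ) :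
    T (K *ᵥ v) ≤ T v := by
  classical
  exact card_support_mulVec_le K (fun _ _ _ => hK.eq_of_ne_zero) v

lemma T_smul {𝕜 : Type*} [DivisionRing 𝕜] [Module 𝕜 ℂ] {c : 𝕜}
    (hc : c ≠ 0) (v : ι → ℂ) : T (c • v) = T v := by
  simp [T, hc]

lemma T_pos {v : ι → ℂ} : 0 < T v ↔ v ≠ 0 := by
  simp [T, card_pos, filter_nonempty_iff, Function.ne_iff]

theorem incoherentPreserving_coherence_rank_general {d : ℕ} (K : Matrix (Fin d) (Fin d) ℂ)
    (hK : IncoherentPreserving K) (φ : Fin d → ℂ)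
    (hKφ : K.mulVec φ ≠ 0) :
    T (K.mulVec φ) ≤ T φ ∧
    Real.logb 2
        (T ((Real.sqrt (∑ i, Complex.normSq (K.mulVec φ i)))⁻¹ • K.mulVec φ) : ℝ) ≤
      Real.logb 2 (T φ : ℝ) := by
  have hle := T_mulVec_le hK φ
  have hnorm : Real.sqrt (∑ i, Complex.normSq (K.mulVec φ i)) ≠ 0 := by
    obtain ⟨k, hk⟩ := Function.ne_iff.1 hKφ
    exact Real.sqrt_ne_zero'.2 <| sum_pos' (fun i _ => Complex.normSq_nonneg _)
      ⟨k, mem_univ k, Complex.normSq_pos.2 hk⟩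
  refine ⟨hle, ?_⟩
  rw [T_smul (inv_ne_zero hnorm)]
  exact Real.logb_le_logb_of_le one_lt_two (mod_cast T_pos.2 hKφ) (mod_cast hle)

/-- an incoherent-preserving Kraus operator does not increase the
coherence rank of a pure state. -/
theorem incoherentPreserving_coherence_rank {d : ℕ} (K : Matrix (Fin d) (Fin d) ℂ)
    (hK : IncoherentPreserving K) (φ : Fin d → ℂ)
    (hφ : ∑ i, Complex.normSq (φ i) = 1) (hKφ : K.mulVec φ ≠ 0) :
    T (K.mulVec φ) ≤ T φ ∧
    Real.logb 2
        (T ((Real.sqrt (∑ i, Complex.normSq (K.mulVec φ i)))⁻¹ • K.mulVec φ) : ℝ) ≤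
      Real.logb 2 (T φ : ℝ) :=
  incoherentPreserving_coherence_rank_general K hK φ hKφ

end OneShot
end
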